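/- Every generalized 2-Segal horn inclusion Λ^S[n] ↪ Δ[n] is a finite composition of pushouts (cobase changes) of 2-Segal horn inclusions; in particular it lies in the weakly saturated class generated by the 2-Segal horn inclusions. -/

import Mathlib

open CategoryTheory CategoryTheory.Limits

set_option linter.unusedVariables false

namespace Q2S

open Simplicial

/-! ## Triangulations of the (n+1)-gon -/

/-- `(p, q)` is a chord of one of the triangles in `tris`. -/
def IsChord (tris : Finset (ℕ × ℕ × ℕ)) (p q : ℕ) : Prop :=
  ∃ t ∈ tris, (p, q) = (t.1, t.2.1) ∨ (p, q) = (t.2.1, t.2.2) ∨ (p, q) = (t.1, t.2.2)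

/-- A triangulation of the `(n+1)`-gon with vertices `0, …, n`: a set of `n - 1`
triples `a < b < c` of vertices whose chords are pairwise noncrossing. -/
structure Triangulation (n : ℕ) where
  tris : Finset (ℕ × ℕ × ℕ)
  card_eq : tris.card = n - 1
  lt₁ : ∀ t ∈ tris, t.1 < t.2.1
  lt₂ : ∀ t ∈ tris, t.2.1 < t.2.2
  le_n : ∀ t ∈ tris, t.2.2 ≤ n
  noncrossing : ∀ p q r s : ℕ, IsChord tris p q → IsChord tris r s →
    ¬(p < r ∧ r < q ∧ q < s)

/-- A vertex `i` is extreme in a triangulation of the `(n+1)`-gon. -/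
def Triangulation.IsExtreme {n : ℕ} (T : Triangulation n) (i : ℕ) : Prop :=
  (0 < i ∧ i < n ∧ (i - 1, i, i + 1) ∈ T.tris) ∨
  (i = 0 ∧ (0, 1, n) ∈ T.tris) ∨
  (i = n ∧ (0, n - 1, n) ∈ T.tris)

/-! ## Subcomplexes of the standard simplex -/

/-- The simplicial subset of `Δ[n]` cut out by a predicate on simplices which is closed
under the simplicial operators. -/
def simplexSub (n : ℕ) (P : ∀ ⦃m : SimplexCategoryᵒᵖ⦄, Δ[n].obj m → Prop)
    (hP : ∀ ⦃m m' : SimplexCategoryᵒᵖ⦄ (φ : m ⟶ m') (α : Δ[n].obj m), P α → P (Δ[n].map φ α)) :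
    SSet where
  obj m := { α : Δ[n].obj m // P α }
  map φ := TypeCat.ofHom (fun x => ⟨Δ[n].map φ x.1, hP φ x.1 x.2⟩)
  map_id m := by
    ext x
    first
      | exact Δ[n].map_id_apply m x.1
      | simp
  map_comp φ ψ := by
    ext x
    first
      | (apply Subtype.ext; exact Δ[n].map_comp_apply φ ψ x.1)
      | rfl
      | (apply Subtype.ext; simp)

/-- The inclusion of such a simplicial subset into `Δ[n]`. -/
def simplexSubIncl (n : ℕ) (P : ∀ ⦃m : SimplexCategoryᵒᵖ⦄, Δ[n].obj m → Prop)
    (hP : ∀ ⦃m m' : SimplexCategoryᵒᵖ⦄ (φ : m ⟶ m') (α : Δ[n].obj m), P α → P (Δ[n].map φ α)) :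
    simplexSub n P hP ⟶ Δ[n] where
  app m := TypeCat.ofHom (fun x => x.1)
  naturality _ _ _ := rfl

lemma genHorn_closed (n : ℕ) (S : Set (Fin (n + 1))) ⦃m m' : SimplexCategoryᵒᵖ⦄
    (φ : m ⟶ m') (α : Δ[n].obj m) (h : ∃ i ∈ S, ∀ k, SSet.stdSimplex.asOrderHom α k ≠ i) :
    ∃ i ∈ S, ∀ k, SSet.stdSimplex.asOrderHom (Δ[n].map φ α) k ≠ i := by
  obtain ⟨i, hiS, hi⟩ := h
  exact ⟨i, hiS, fun k => hi _⟩

/-- The generalized horn `Λ^S[n] ⊆ Δ[n]`: the union of the faces `dᵢ(Δ[n])` for `i ∈ S`.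
Its simplices are those maps `[m] → [n]` whose image misses some `i ∈ S`. -/
def genHorn (n : ℕ) (S : Set (Fin (n + 1))) : SSet :=
  simplexSub n (fun _ α => ∃ i ∈ S, ∀ k, SSet.stdSimplex.asOrderHom α k ≠ i) (genHorn_closed n S)

/-- The inclusion `Λ^S[n] ↪ Δ[n]` of a generalized horn. -/
def genHornIncl (n : ℕ) (S : Set (Fin (n + 1))) : genHorn n S ⟶ Δ[n] :=
  simplexSubIncl n _ _

/-! ## Broken subsets and 2-Segal horns -/

/-- A subset `S ⊆ {0, …, n}` is broken. -/
def BrokenSet {n : ℕ} (S : Set (Fin (n + 1))) : Prop :=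
  ∃ a b c d : Fin (n + 1), a < b ∧ b < c ∧ c < d ∧
    ((a ∈ S ∧ c ∈ S ∧ b ∉ S ∧ d ∉ S) ∨ (b ∈ S ∧ d ∈ S ∧ a ∉ S ∧ c ∉ S))

/-- The pair `{i, j}` with `i < j` is broken in `{0, …, n}`:
`i < j - 1` and not (`i = 0` and `j = n`). -/
def PairBroken {n : ℕ} (i j : Fin (n + 1)) : Prop :=
  (i : ℕ) + 1 < (j : ℕ) ∧ ¬((i : ℕ) = 0 ∧ (j : ℕ) = n)

/-- The 2-Segal horn `Λ^{i,j}[n]`: the union of all faces of `Δ[n]` except `dᵢ` and `dⱼ`. -/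
def twoSegalHorn (n : ℕ) (i j : Fin (n + 1)) : SSet :=
  genHorn n ({i, j}ᶜ)

/-- The inclusion of the 2-Segal horn `Λ^{i,j}[n] ↪ Δ[n]`. -/
def twoSegalHornIncl (n : ℕ) (i j : Fin (n + 1)) : twoSegalHorn n i j ⟶ Δ[n] :=
  genHornIncl n _

/-- A simplicial set is a quasi-2-Segal set if it has fillers for all 2-Segal horns. -/
def IsQuasiTwoSegal (X : SSet) : Prop :=
  ∀ (n : ℕ) (i j : Fin (n + 1)), 3 ≤ n → PairBroken i j →
    ∀ f : twoSegalHorn n i j ⟶ X, ∃ g : Δ[n] ⟶ X, twoSegalHornIncl n i j ≫ g = f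

/-! ## 2-Segal spines -/

lemma spine_closed {n : ℕ} (T : Triangulation n) ⦃m m' : SimplexCategoryᵒᵖ⦄
    (φ : m ⟶ m') (α : Δ[n].obj m)
    (h : ∃ t ∈ T.tris, ∀ k, (SSet.stdSimplex.asOrderHom α k : ℕ) = t.1 ∨
      (SSet.stdSimplex.asOrderHom α k : ℕ) = t.2.1 ∨ (SSet.stdSimplex.asOrderHom α k : ℕ) = t.2.2) :
    ∃ t ∈ T.tris, ∀ k, (SSet.stdSimplex.asOrderHom (Δ[n].map φ α) k : ℕ) = t.1 ∨
      (SSet.stdSimplex.asOrderHom (Δ[n].map φ α) k : ℕ) = t.2.1 ∨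
      (SSet.stdSimplex.asOrderHom (Δ[n].map φ α) k : ℕ) = t.2.2 := by
  obtain ⟨t, htT, ht⟩ := h
  exact ⟨t, htT, fun k => ht _⟩

/-- The 2-Segal spine associated to a triangulation `T` of the `(n+1)`-gon:
the union of the 2-dimensional faces of `Δ[n]` indexed by the triangles of `T`. -/
def twoSegalSpine (n : ℕ) (T : Triangulation n) : SSet :=
  simplexSub n
    (fun _ α => ∃ t ∈ T.tris, ∀ k, (SSet.stdSimplex.asOrderHom α k : ℕ) = t.1 ∨
      (SSet.stdSimplex.asOrderHom α k : ℕ) = t.2.1 ∨ (SSet.stdSimplex.asOrderHom α k : ℕ) = t.2.2)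
    (spine_closed T)

/-- The 2-Segal spine inclusion. -/
def twoSegalSpineIncl (n : ℕ) (T : Triangulation n) : twoSegalSpine n T ⟶ Δ[n] :=
  simplexSubIncl n _ _

end Q2S

namespace Q2S

universe v u

variable {C : Type u} [Category.{v} C]

/-! ## Retracts, transfinite composition, weakly saturated classes -/

/-- `f` is a retract of `g` in the arrow category. -/
def IsRetractOf {X Y Z W : C} (f : X ⟶ Y) (g : Z ⟶ W) : Prop :=
  ∃ (a : X ⟶ Z) (b : Z ⟶ X) (c : Y ⟶ W) (d : W ⟶ Y),
    a ≫ b = 𝟙 X ∧ c ≫ d = 𝟙 Y ∧ a ≫ g = f ≫ c ∧ g ≫ d = b ≫ f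

/-- A class of morphisms is stable under retracts. -/
def StableUnderRetracts (P : MorphismProperty C) : Prop :=
  ∀ ⦃X Y Z W : C⦄ (f : X ⟶ Y) (g : Z ⟶ W), IsRetractOf f g → P g → P f

/-- The inclusion functor of `Set.Iio j` into a preorder `J`. -/
def iioFunctor {J : Type*} [Preorder J] (j : J) : Set.Iio j ⥤ J :=
  Monotone.functor (f := (Subtype.val : Set.Iio j → J)) (fun _ _ h => h)

/-- The cocone on the restriction of `F` to `Set.Iio j` with apex `F.obj j`. -/
def coconeAt {J : Type*} [Preorder J] (F : J ⥤ C) (j : J) :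
    Cocone (iioFunctor j ⋙ F) where
  pt := F.obj j
  ι :=
    { app := fun i => F.map (homOfLE i.2.le)
      naturality := fun a b u => by
        dsimp [iioFunctor, Monotone.functor]
        rw [← F.map_comp, Category.comp_id]
        rfl }

/-- A class of morphisms is stable under transfinite composition: for any well-ordered
diagram whose successor maps lie in `P` and which is continuous at limit stages, the
map from the bottom object to any colimit lies in `P`. -/
def StableUnderTransfiniteComposition (P : MorphismProperty C) : Prop :=
  ∀ (J : Type) [LinearOrder J] [SuccOrder J] [OrderBot J] [WellFoundedLT J]
    (F : J ⥤ C),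
    (∀ j : J, ¬IsMax j → P (F.map (homOfLE (Order.le_succ j)))) →
    (∀ j : J, Order.IsSuccLimit j → Nonempty (IsColimit (coconeAt F j))) →
    ∀ (c : Cocone F), IsColimit c → P (c.ι.app ⊥)

/-- A weakly saturated class of morphisms: one stable under cobase change (pushouts),
retracts, and transfinite composition. -/
def WeaklySaturated (P : MorphismProperty C) : Prop :=
  P.IsStableUnderCobaseChange ∧ StableUnderRetracts P ∧ StableUnderTransfiniteComposition P

/-- The weakly saturated class generated by `S`: the smallest weakly saturated class
containing `S`. -/
def Saturation (S : MorphismProperty C) : MorphismProperty C :=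
  fun _ _ f => ∀ P : MorphismProperty C, WeaklySaturated P → S ≤ P → P f

/-- The class of morphisms which are cobase changes (pushouts) of morphisms in `S`. -/
def PushoutsOf (S : MorphismProperty C) : MorphismProperty C := fun X Y f =>
  ∃ (A B : C) (g : A ⟶ B) (_ : S g) (t : A ⟶ X) (u : B ⟶ Y), IsPushout g t u f

/-- The closure of a class of morphisms under finite composition. -/
inductive FinComp (S : MorphismProperty C) : ∀ ⦃X Y : C⦄, (X ⟶ Y) → Prop where
  | of {X Y : C} (f : X ⟶ Y) : S f → FinComp S f
  | comp {X Y Z : C} (f : X ⟶ Y) (g : Y ⟶ Z) :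
      FinComp S f → FinComp S g → FinComp S (f ≫ g)

end Q2S

/-! ## Generating classes of inclusions -/

namespace Q2S

/-- The class of 2-Segal horn inclusions `Λ^{i,j}[n] ↪ Δ[n]` (with `n ≥ 3` and `{i,j}` broken). -/
inductive TwoSegalHorns : ∀ ⦃X Y : SSet⦄, (X ⟶ Y) → Prop where
  | mk (n : ℕ) (i j : Fin (n + 1)) (hn : 3 ≤ n) (hij : PairBroken i j) :
      TwoSegalHorns (twoSegalHornIncl n i j)

/-- The class of generalized 2-Segal horn inclusions `Λ^S[n] ↪ Δ[n]`
(with `n ≥ 3` and `S` broken). -/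
inductive GenTwoSegalHorns : ∀ ⦃X Y : SSet⦄, (X ⟶ Y) → Prop where
  | mk (n : ℕ) (S : Set (Fin (n + 1))) (hn : 3 ≤ n) (hS : BrokenSet S) :
      GenTwoSegalHorns (genHornIncl n S)

/-- The class of generalized 2-Segal horn inclusions missing an outer face, i.e. whose
set of missing faces contains `0` or contains `n`. -/
inductive GenTwoSegalHornsOuter : ∀ ⦃X Y : SSet⦄, (X ⟶ Y) → Prop where
  | mk (n : ℕ) (S : Set (Fin (n + 1))) (hn : 3 ≤ n) (hS : BrokenSet S)
      (houter : (0 : Fin (n + 1)) ∉ S ∨ Fin.last n ∉ S) :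
      GenTwoSegalHornsOuter (genHornIncl n S)

/-- The class of 2-Segal spine inclusions. -/
inductive TwoSegalSpines : ∀ ⦃X Y : SSet⦄, (X ⟶ Y) → Prop where
  | mk (n : ℕ) (hn : 3 ≤ n) (T : Triangulation n) :
      TwoSegalSpines (twoSegalSpineIncl n T)

/-- The class of 2-Segal horn inclusions, as a `MorphismProperty`. -/
def twoSegalHornClass : CategoryTheory.MorphismProperty SSet := fun _ _ f => TwoSegalHorns f

/-- The class of generalized 2-Segal horn inclusions missing an outer face,
as a `MorphismProperty`. -/
def genTwoSegalHornOuterClass : CategoryTheory.MorphismProperty SSet :=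
  fun _ _ f => GenTwoSegalHornsOuter f

/-- The class of 2-Segal spine inclusions, as a `MorphismProperty`. -/
def twoSegalSpineClass : CategoryTheory.MorphismProperty SSet := fun _ _ f => TwoSegalSpines f

/-- The 2-Segal anodyne maps: the weakly saturated class generated by the
2-Segal horn inclusions. -/
def TwoSegalAnodyne : CategoryTheory.MorphismProperty SSet :=
  Saturation twoSegalHornClass

end Q2S

namespace Q2S

open Simplicial SimplexCategory

section Geometry

/-! ### SimplexCategory factorization helpers -/

lemma comp_δ_injective {m : ℕ} (k : Fin (m + 2)) {p : SimplexCategory} {g g' : p ⟶ ⦋m⦌}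
    (h : g ≫ δ k = g' ≫ δ k) : g = g' := by
  ext l
  have h1 := congrArg (fun f => Hom.toOrderHom f l) h
  have h2 : k.succAbove (g.toOrderHom l) = k.succAbove (g'.toOrderHom l) := h1
  exact congrArg Fin.val (Fin.succAbove_right_injective (p := k) h2)

lemma exists_comp_δ {m : ℕ} (k : Fin (m + 2)) {p : SimplexCategory} (f : p ⟶ ⦋m + 1⦌)
    (hf : ∀ l, f.toOrderHom l ≠ k) : ∃ g, g ≫ δ k = f := by
  obtain ⟨g, hg⟩ := eq_comp_δ_of_not_surjective' f k hf
  exact ⟨g, hg.symm⟩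

variable {m : ℕ} (S : Set (Fin (m + 2))) (k : Fin (m + 2))

/-- The restriction of `S` along the face `δ k`. -/
def resSet : Set (Fin (m + 1)) := {j | k.succAbove j ∈ S}

/-- The map `Λ^{S'}[m] ⟶ Λ^S[m+1]` induced by `δ k`, where `S' = resSet S k`. -/
def hornδ : genHorn m (resSet S k) ⟶ genHorn (m + 1) S where
  app p := TypeCat.ofHom (fun x => ⟨ULift.up (x.1.down ≫ δ k), by
    obtain ⟨i', hi'S, hi'⟩ := x.2
    exact ⟨k.succAbove i', hi'S, fun l h =>
      hi' l (Fin.succAbove_right_injective (p := k) h)⟩⟩)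
  naturality p q φ := rfl

/-- The map `Δ[m] ⟶ Λ^{S∪{k}}[m+1]` induced by `δ k`. -/
def simplexδ : Δ[m] ⟶ genHorn (m + 1) (S ∪ {k}) where
  app p := TypeCat.ofHom (fun α => ⟨ULift.up (α.down ≫ δ k), ⟨k, Or.inr rfl, fun l => Fin.succAbove_ne k _⟩⟩)
  naturality p q φ := rfl

/-- The inclusion `Λ^S[n] ⟶ Λ^{S∪{k}}[n]`. -/
def hornIncl (n : ℕ) (S : Set (Fin (n + 1))) (k : Fin (n + 1)) :
    genHorn n S ⟶ genHorn n (S ∪ {k}) where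
  app p := TypeCat.ofHom (fun x => ⟨x.1, by obtain ⟨i, hiS, hi⟩ := x.2; exact ⟨i, Or.inl hiS, hi⟩⟩)
  naturality p q φ := rfl

lemma hornIncl_comp (n : ℕ) (S : Set (Fin (n + 1))) (k : Fin (n + 1)) :
    hornIncl n S k ≫ genHornIncl n (S ∪ {k}) = genHornIncl n S := rfl

lemma square_comm : genHornIncl m (resSet S k) ≫ simplexδ S k = hornδ S k ≫ hornIncl (m + 1) S k := by
  ext p x
  exact Subtype.ext rfl

section Desc

variable (s : PushoutCocone (genHornIncl m (resSet S k)) (hornδ S k))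

/-- If a simplex of `Λ^{S∪{k}}` misses no element of `S`, then it misses `k`. -/
lemma missing_k {p : SimplexCategoryᵒᵖ} (x : (genHorn (m + 1) (S ∪ {k})).obj p)
    (h : ¬∃ i ∈ S, ∀ l, SSet.stdSimplex.asOrderHom x.1 l ≠ i) : ∀ l, x.1.down.toOrderHom l ≠ k := by
  obtain ⟨i, hiS, hi⟩ := x.2
  rcases hiS with hiS | hiS
  · exact absurd ⟨i, hiS, hi⟩ h
  · exact hiS ▸ hi

/-- Key agreement: on overlaps the two cocone legs agree. -/
lemma descAgree (hk : k ∉ S) {p : SimplexCategoryᵒᵖ} (g : p.unop ⟶ ⦋m⦌)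
    (h : ∃ i ∈ S, ∀ l, (g ≫ δ k).toOrderHom l ≠ i) :
    s.inr.app p ⟨ULift.up (g ≫ δ k), by
        obtain ⟨i, hiS, hi⟩ := h; exact ⟨i, hiS, hi⟩⟩ = s.inl.app p (ULift.up g) := by
  obtain ⟨i, hiS, hi⟩ := h
  have hik : i ≠ k := fun e => hk (e ▸ hiS)
  obtain ⟨i', hi'⟩ := Fin.exists_succAbove_eq hik
  have hmem : i' ∈ resSet S k := show k.succAbove i' ∈ S by rw [hi']; exact hiS
  have hg : ∀ l, g.toOrderHom l ≠ i' := by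
    intro l hl
    exact hi l (show k.succAbove (g.toOrderHom l) = i by rw [hl, hi'])
  set z : (genHorn m (resSet S k)).obj p := ⟨ULift.up g, ⟨i', hmem, hg⟩⟩ with hz
  have h0 : s.inl.app p (ULift.up g) = s.inr.app p ((hornδ S k).app p z) :=
    ConcreteCategory.congr_hom (congrArg (fun (f : genHorn m (resSet S k) ⟶ s.pt) => f.app p) s.condition) z
  refine Eq.trans ?_ h0.symm
  exact congrArg (s.inr.app p) (Subtype.ext rfl)

open Classical in
/-- The descent map on a pushout cocone. -/
noncomputable def descFun (p : SimplexCategoryᵒᵖ) (x : (genHorn (m + 1) (S ∪ {k})).obj p) :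
    s.pt.obj p :=
  if h : ∃ i ∈ S, ∀ l, SSet.stdSimplex.asOrderHom x.1 l ≠ i then s.inr.app p ⟨x.1, h⟩
  else s.inl.app p (ULift.up (exists_comp_δ k x.1.down (missing_k S k x h)).choose)

lemma descFun_of_mem {p : SimplexCategoryᵒᵖ} (x : (genHorn (m + 1) (S ∪ {k})).obj p)
    (h : ∃ i ∈ S, ∀ l, SSet.stdSimplex.asOrderHom x.1 l ≠ i) :
    descFun S k s p x = s.inr.app p ⟨x.1, h⟩ := by
  rw [descFun, dif_pos h]

lemma descFun_of_factor (hk : k ∉ S) {p : SimplexCategoryᵒᵖ}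
    (x : (genHorn (m + 1) (S ∪ {k})).obj p)
    (g : p.unop ⟶ ⦋m⦌) (hg : g ≫ δ k = x.1.down) :
    descFun S k s p x = s.inl.app p (ULift.up g) := by
  by_cases h : ∃ i ∈ S, ∀ l, SSet.stdSimplex.asOrderHom x.1 l ≠ i
  · rw [descFun, dif_pos h]
    have h' : ∃ i ∈ S, ∀ l, (g ≫ δ k).toOrderHom l ≠ i := by rw [hg]; exact h
    refine Eq.trans ?_ (descAgree S k s hk g h')
    refine congrArg (s.inr.app p) (Subtype.ext ?_)
    show x.1 = ULift.up (g ≫ δ k)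
    exact congrArg ULift.up hg.symm
  · rw [descFun, dif_neg h]
    exact congrArg (fun t => s.inl.app p (ULift.up t)) (comp_δ_injective k
      ((exists_comp_δ k x.1.down (missing_k S k x h)).choose_spec.trans hg.symm))

/-- The descent natural transformation. -/
noncomputable def descNat (hk : k ∉ S) : genHorn (m + 1) (S ∪ {k}) ⟶ s.pt where
  app p := TypeCat.ofHom (descFun S k s p)
  naturality p q φ := by
    ext x
    show descFun S k s q ((genHorn (m + 1) (S ∪ {k})).map φ x) = s.pt.map φ (descFun S k s p x)
    by_cases h : ∃ i ∈ S, ∀ l, SSet.stdSimplex.asOrderHom x.1 l ≠ i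
    · rw [descFun_of_mem S k s x h]
      have hq : ∃ i ∈ S, ∀ l, SSet.stdSimplex.asOrderHom ((genHorn (m + 1) (S ∪ {k})).map φ x).1 l ≠ i := by
        obtain ⟨i, hiS, hi⟩ := h
        exact ⟨i, hiS, fun l => hi _⟩
      rw [descFun_of_mem S k s _ hq]
      have hnat := NatTrans.naturality_apply s.inr φ
        (⟨x.1, h⟩ : (genHorn (m + 1) S).obj p)
      refine Eq.trans ?_ hnat
      exact congrArg (s.inr.app q) (Subtype.ext rfl)
    · obtain ⟨g, hg⟩ := exists_comp_δ k x.1.down (missing_k S k x h)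
      rw [descFun_of_factor S k s hk x g hg]
      have hgq : (φ.unop ≫ g) ≫ δ k = ((genHorn (m + 1) (S ∪ {k})).map φ x).1.down := by
        show (φ.unop ≫ g) ≫ δ k = φ.unop ≫ x.1.down
        rw [Category.assoc, hg]
      rw [descFun_of_factor S k s hk _ _ hgq]
      have h2 : Δ[m].map φ (ULift.up g) = ULift.up (φ.unop ≫ g) := rfl
      rw [← h2]
      exact NatTrans.naturality_apply s.inl φ _

lemma fac_left (hk : k ∉ S) : simplexδ S k ≫ descNat S k s hk = s.inl := by
  ext p α
  exact descFun_of_factor S k s hk _ α.down rfl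

lemma fac_right (hk : k ∉ S) : hornIncl (m + 1) S k ≫ descNat S k s hk = s.inr := by
  ext p x
  refine (descFun_of_mem S k s _ x.2).trans ?_
  exact congrArg (s.inr.app p) (Subtype.ext rfl)

lemma desc_uniq (hk : k ∉ S) (q : genHorn (m + 1) (S ∪ {k}) ⟶ s.pt)
    (hl : simplexδ S k ≫ q = s.inl) (hr : hornIncl (m + 1) S k ≫ q = s.inr) :
    q = descNat S k s hk := by
  ext p x
  show q.app p x = descFun S k s p x
  by_cases h : ∃ i ∈ S, ∀ l, SSet.stdSimplex.asOrderHom x.1 l ≠ i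
  · rw [descFun_of_mem S k s x h, ← hr]
    exact congrArg (q.app p) (Subtype.ext rfl)
  · obtain ⟨g, hg⟩ := exists_comp_δ k x.1.down (missing_k S k x h)
    rw [descFun_of_factor S k s hk x g hg, ← hl]
    show q.app p x = q.app p ((simplexδ S k).app p (ULift.up g))
    refine congrArg (q.app p) (Subtype.ext ?_)
    show x.1 = ULift.up (g ≫ δ k)
    exact congrArg ULift.up hg.symm

/-- The pushout square attaching the face `k` to the generalized horn `Λ^S[m+1]`. -/
theorem isPushout_attach (hk : k ∉ S) :
    IsPushout (genHornIncl m (resSet S k)) (hornδ S k) (simplexδ S k) (hornIncl (m + 1) S k) := by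
  refine IsPushout.of_isColimit' ⟨square_comm S k⟩ ?_
  exact PushoutCocone.IsColimit.mk _ (fun s => descNat S k s hk)
    (fun s => fac_left S k s hk) (fun s => fac_right S k s hk)
    (fun s q hl hr => desc_uniq S k s hk q hl hr)

end Desc

end Geometry

end Q2S
namespace Q2S

universe v u

section Cat

variable {C : Type u} [Category.{v} C]

lemma finComp_of_isPushout [HasPushouts C] {S : MorphismProperty C}
    {A B : C} {g : A ⟶ B} (hg : FinComp (PushoutsOf S) g) :
    ∀ {X Y : C} (t : A ⟶ X) (u : B ⟶ Y) (f : X ⟶ Y), IsPushout g t u f →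
      FinComp (PushoutsOf S) f := by
  induction hg with
  | of g hg =>
    intro X Y t u f sq
    obtain ⟨A₀, B₀, g₀, hg₀, t₀, u₀, sq₀⟩ := hg
    exact .of f ⟨A₀, B₀, g₀, hg₀, t₀ ≫ t, u₀ ≫ u, sq₀.paste_vert sq⟩
  | comp g₁ g₂ h₁ h₂ ih₁ ih₂ =>
    intro X Y t u f sq
    have t0 := IsPushout.of_hasPushout g₁ t
    have sq₂ := IsPushout.of_left' sq t0
    have hf : f = pushout.inr g₁ t ≫ t0.desc (g₂ ≫ u) f (by rw [← Category.assoc, sq.w]) :=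
      (t0.inr_desc _ _ _).symm
    rw [hf]
    exact .comp _ _ (ih₁ _ _ _ t0) (ih₂ _ _ _ sq₂)

/-- The three-object functor `X ⟶ Y ⟶ Z` out of `Fin 3`. -/
def tripleF {X Y Z : C} (f : X ⟶ Y) (g : Y ⟶ Z) : Fin 3 ⥤ C where
  obj i := match i with
    | ⟨0, _⟩ => X
    | ⟨1, _⟩ => Y
    | ⟨2, _⟩ => Z
  map {i j} h := match i, j, h with
    | ⟨0, _⟩, ⟨0, _⟩, _ => 𝟙 X
    | ⟨0, _⟩, ⟨1, _⟩, _ => f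
    | ⟨0, _⟩, ⟨2, _⟩, _ => f ≫ g
    | ⟨1, _⟩, ⟨1, _⟩, _ => 𝟙 Y
    | ⟨1, _⟩, ⟨2, _⟩, _ => g
    | ⟨2, _⟩, ⟨2, _⟩, _ => 𝟙 Z
    | ⟨1, _⟩, ⟨0, _⟩, h => absurd (Fin.mk_le_mk.mp (leOfHom h)) (by omega)
    | ⟨2, _⟩, ⟨0, _⟩, h => absurd (Fin.mk_le_mk.mp (leOfHom h)) (by omega)
    | ⟨2, _⟩, ⟨1, _⟩, h => absurd (Fin.mk_le_mk.mp (leOfHom h)) (by omega)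
  map_id i := match i with
    | ⟨0, _⟩ => rfl
    | ⟨1, _⟩ => rfl
    | ⟨2, _⟩ => rfl
  map_comp {i j l} hij hjl := by
    have hij' : i ≤ j := leOfHom hij
    have hjl' : j ≤ l := leOfHom hjl
    obtain ⟨i, hi⟩ := i; obtain ⟨j, hj⟩ := j; obtain ⟨l, hl⟩ := l
    have hij'' : i ≤ j := hij'
    have hjl'' : j ≤ l := hjl'
    interval_cases i <;> interval_cases j <;> interval_cases l <;> simp

/-- The colimit cocone on `tripleF` with apex `Z`. -/
def tripleCocone {X Y Z : C} (f : X ⟶ Y) (g : Y ⟶ Z) : Cocone (tripleF f g) where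
  pt := Z
  ι :=
    { app := fun i => (tripleF f g).map (homOfLE (Fin.le_last i))
      naturality := fun a b u => by
        dsimp only [Functor.const_obj_obj, Functor.const_obj_map]
        erw [Category.comp_id, ← Functor.map_comp]
        exact congrArg (tripleF f g).map (Subsingleton.elim _ _) }

/-- The cocone is colimiting. -/
def tripleIsColimit {X Y Z : C} (f : X ⟶ Y) (g : Y ⟶ Z) : IsColimit (tripleCocone f g) where
  desc s := s.ι.app (Fin.last 2)
  fac s i := by
    have h := s.ι.naturality (homOfLE (Fin.le_last i))
    exact h.trans (Category.comp_id _)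
  uniq s q hq := by
    have h3 : (tripleCocone f g).ι.app (Fin.last 2) = 𝟙 Z := by
      show (tripleF f g).map (homOfLE (Fin.le_last (Fin.last 2))) = 𝟙 Z
      rw [show homOfLE (Fin.le_last (Fin.last 2)) = 𝟙 (Fin.last 2) from Subsingleton.elim _ _]
      exact (tripleF f g).map_id _
    show q = s.ι.app (Fin.last 2)
    exact (Category.id_comp q).symm.trans ((congrArg (fun t => t ≫ q) h3.symm).trans (hq _))

lemma weaklySaturated_comp {P : MorphismProperty C} (hP : WeaklySaturated P)
    {X Y Z : C} {f : X ⟶ Y} {g : Y ⟶ Z} (hf : P f) (hg : P g) : P (f ≫ g) := by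
  obtain ⟨hpo, hre, htc⟩ := hP
  have h01 : (0 : Fin 3) ⋖ 1 := ⟨by decide, by decide⟩
  have h12 : (1 : Fin 3) ⋖ 2 := ⟨by decide, by decide⟩
  have cond1 : ∀ j : Fin 3, ¬IsMax j →
      P ((tripleF f g).map (homOfLE (Order.le_succ j))) := by
    have key : ∀ (i x : Fin 3) (h : i ≤ x), (i = 0 ∧ x = 1) ∨ (i = 1 ∧ x = 2) →
        P ((tripleF f g).map (homOfLE h)) := by
      rintro i x h (⟨rfl, rfl⟩ | ⟨rfl, rfl⟩)
      · exact hf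
      · exact hg
    intro j hj
    fin_cases j
    · exact key _ _ _ (Or.inl ⟨rfl, h01.succ_eq⟩)
    · exact key _ _ _ (Or.inr ⟨rfl, h12.succ_eq⟩)
    · exact absurd (fun c _ => Fin.le_last c) hj
  have cond2 : ∀ j : Fin 3, Order.IsSuccLimit j →
      Nonempty (IsColimit (coconeAt (tripleF f g) j)) := by
    intro j hj
    exfalso
    fin_cases j
    · exact hj.1 (fun c _ => Fin.zero_le c)
    · exact hj.2 0 h01
    · exact hj.2 1 h12
  have key : P ((tripleCocone f g).ι.app (⊥ : Fin 3)) :=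
    @htc (Fin 3) (inferInstanceAs (LinearOrder (Fin 3))) (inferInstanceAs (SuccOrder (Fin 3)))
      (inferInstanceAs (OrderBot (Fin 3))) (inferInstanceAs (WellFoundedLT (Fin 3)))
      (tripleF f g) cond1 cond2 (tripleCocone f g) (tripleIsColimit f g)
  have step : ∀ (b : Fin 3), b = 0 → P ((tripleCocone f g).ι.app b) → P (f ≫ g) := by
    rintro b rfl hP'
    exact (show (tripleCocone f g).ι.app 0 = f ≫ g from rfl) ▸ hP'
  exact step ⊥ rfl key

lemma finComp_pushoutsOf_le_saturation [HasPushouts C] {S : MorphismProperty C}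
    {X Y : C} {f : X ⟶ Y} (hf : FinComp (PushoutsOf S) f) : Saturation S f := by
  induction hf with
  | of f hf =>
    intro P hP hle
    obtain ⟨A, B, g, hg, t, u, sq⟩ := hf
    exact hP.1.of_isPushout sq.flip (hle _ hg)
  | comp f g h₁ h₂ ih₁ ih₂ =>
    intro P hP hle
    exact weaklySaturated_comp hP (ih₁ P hP hle) (ih₂ P hP hle)

end Cat

end Q2S
namespace Q2S

section Broken

variable {n : ℕ}

lemma brokenSet_iff {S : Set (Fin (n + 1))} :
    BrokenSet S ↔ ∃ p r q, p < r ∧ r < q ∧ p ∉ S ∧ r ∈ S ∧ q ∉ S ∧ ∃ s ∈ S, s < p ∨ q < s := by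
  constructor
  · rintro ⟨a, b, c, d, hab, hbc, hcd, ⟨haS, hcS, hbS, hdS⟩ | ⟨hbS, hdS, haS, hcS⟩⟩
    · exact ⟨b, c, d, hbc, hcd, hbS, hcS, hdS, a, haS, Or.inl hab⟩
    · exact ⟨a, b, c, hab, hbc, haS, hbS, hcS, d, hdS, Or.inr hcd⟩
  · rintro ⟨p, r, q, hpr, hrq, hp, hr, hq, s, hs, hsp | hqs⟩
    · exact ⟨s, p, r, q, hsp, hpr, hrq, Or.inl ⟨hs, hr, hp, hq⟩⟩
    · exact ⟨p, r, q, s, hpr, hrq, hqs, Or.inr ⟨hr, hs, hp, hq⟩⟩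

lemma BrokenSet.two_le_ncard_compl {S : Set (Fin (n + 1))} (hS : BrokenSet S) :
    2 ≤ Sᶜ.ncard := by
  obtain ⟨p, r, q, hpr, hrq, hp, hr, hq, -⟩ := brokenSet_iff.mp hS
  have hsub : ({p, q} : Set (Fin (n + 1))) ⊆ Sᶜ := by
    rintro x (rfl | rfl)
    · exact hp
    · exact hq
  calc 2 = ({p, q} : Set (Fin (n + 1))).ncard :=
        (Set.ncard_pair (ne_of_lt (hpr.trans hrq))).symm
    _ ≤ Sᶜ.ncard := Set.ncard_le_ncard hsub (Set.toFinite _)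

lemma BrokenSet.two_le_ncard {S : Set (Fin (n + 1))} (hS : BrokenSet S) :
    2 ≤ S.ncard := by
  obtain ⟨p, r, q, hpr, hrq, hp, hr, hq, s, hs, hd⟩ := brokenSet_iff.mp hS
  have hrs : r ≠ s := by
    intro e
    have h1 : (p : ℕ) < r := hpr
    have h2 : (r : ℕ) < q := hrq
    have h3 : (r : ℕ) = s := congrArg Fin.val e
    rcases hd with h | h
    · have h4 : (s : ℕ) < p := h
      omega
    · have h4 : (q : ℕ) < s := h
      omega
  have hsub : ({r, s} : Set (Fin (n + 1))) ⊆ S := by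
    rintro x (rfl | rfl)
    · exact hr
    · exact hs
  calc 2 = ({r, s} : Set (Fin (n + 1))).ncard := (Set.ncard_pair hrs).symm
    _ ≤ S.ncard := Set.ncard_le_ncard hsub (Set.toFinite _)

lemma step_dim {S : Set (Fin (n + 1))} (hS : BrokenSet S) (h3 : 3 ≤ Sᶜ.ncard) : 4 ≤ n := by
  have h2 := hS.two_le_ncard
  have hsum := Set.ncard_add_ncard_compl S
  rw [Nat.card_eq_fintype_card, Fintype.card_fin] at hsum
  omega

lemma base_case {S : Set (Fin (n + 1))} (hS : BrokenSet S) (h2 : Sᶜ.ncard = 2) :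
    ∃ i j : Fin (n + 1), PairBroken i j ∧ S = ({i, j}ᶜ : Set (Fin (n + 1))) := by
  obtain ⟨a, b, hab, habs⟩ := Set.ncard_eq_two.mp h2
  have key : ∀ i j : Fin (n + 1), i < j → Sᶜ = {i, j} → PairBroken i j := by
    intro i j hij hc
    obtain ⟨p, r, q, hpr, hrq, hp, hr, hq, s, hs, hd⟩ := brokenSet_iff.mp hS
    have hpij : p = i ∨ p = j := by
      have : p ∈ ({i, j} : Set (Fin (n + 1))) := hc ▸ hp
      simpa using this
    have hqij : q = i ∨ q = j := by
      have : q ∈ ({i, j} : Set (Fin (n + 1))) := hc ▸ hq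
      simpa using this
    have hpq : p < q := hpr.trans hrq
    have hpi : p = i ∧ q = j := by
      rcases hpij with rfl | rfl
      · rcases hqij with rfl | rfl
        · exact absurd hpq (lt_irrefl _)
        · exact ⟨rfl, rfl⟩
      · rcases hqij with rfl | rfl
        · exact absurd (hij.trans hpq) (lt_irrefl _)
        · exact absurd hpq (lt_irrefl _)
    obtain ⟨rfl, rfl⟩ := hpi
    constructor
    · have h1 : (p : ℕ) < (r : ℕ) := hpr
      have h2 : (r : ℕ) < (q : ℕ) := hrq
      omega
    · rintro ⟨hi0, hjn⟩
      rcases hd with h | h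
      · have : (s : ℕ) < (p : ℕ) := h
        omega
      · have : (q : ℕ) < (s : ℕ) := h
        have := s.isLt
        omega
  rcases lt_or_gt_of_ne hab with h | h
  · exact ⟨a, b, key a b h habs, by rw [← habs, compl_compl]⟩
  · exact ⟨b, a, key b a h (by rw [habs, Set.pair_comm]),
      by rw [← Set.pair_comm, ← habs, compl_compl]⟩

lemma step_case {m : ℕ} {S : Set (Fin (m + 2))} (hS : BrokenSet S) (h3 : 3 ≤ Sᶜ.ncard) :
    ∃ k, k ∉ S ∧ BrokenSet (S ∪ {k}) ∧ BrokenSet (resSet S k) := by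
  obtain ⟨p, r, q, hpr, hrq, hp, hr, hq, s, hs, hd⟩ := brokenSet_iff.mp hS
  have hsub : ({p, q} : Set (Fin (m + 2))) ⊆ Sᶜ := by
    rintro x (rfl | rfl)
    · exact hp
    · exact hq
  have hss : ({p, q} : Set (Fin (m + 2))) ⊂ Sᶜ := by
    refine hsub.ssubset_of_ne ?_
    intro e
    rw [← e, Set.ncard_pair (ne_of_lt (hpr.trans hrq))] at h3
    omega
  obtain ⟨k, hkc, hkpq⟩ := Set.exists_of_ssubset hss
  have hk : k ∉ S := hkc
  have hkp : k ≠ p := fun e => hkpq (Or.inl e)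
  have hkq : k ≠ q := fun e => hkpq (Or.inr e)
  have hrk : r ≠ k := fun e => hk (e ▸ hr)
  have hsk : s ≠ k := fun e => hk (e ▸ hs)
  refine ⟨k, hk, ?_, ?_⟩
  · refine brokenSet_iff.mpr ⟨p, r, q, hpr, hrq, ?_, Or.inl hr, ?_, s, Or.inl hs, hd⟩
    · rintro (h | h)
      · exact hp h
      · exact hkp h.symm
    · rintro (h | h)
      · exact hq h
      · exact hkq h.symm
  · obtain ⟨p', hp'⟩ := Fin.exists_succAbove_eq hkp.symm
    obtain ⟨q', hq'⟩ := Fin.exists_succAbove_eq hkq.symm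
    obtain ⟨r', hr'⟩ := Fin.exists_succAbove_eq hrk
    obtain ⟨s', hs'⟩ := Fin.exists_succAbove_eq hsk
    refine brokenSet_iff.mpr ⟨p', r', q', ?_, ?_, ?_, ?_, ?_, s', ?_, ?_⟩
    · exact Fin.succAbove_lt_succAbove_iff.mp (by rw [hp', hr']; exact hpr)
    · exact Fin.succAbove_lt_succAbove_iff.mp (by rw [hr', hq']; exact hrq)
    · show ¬(k.succAbove p' ∈ S)
      rw [hp']
      exact hp
    · show k.succAbove r' ∈ S
      rw [hr']
      exact hr
    · show ¬(k.succAbove q' ∈ S)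
      rw [hq']
      exact hq
    · show k.succAbove s' ∈ S
      rw [hs']
      exact hs
    · rcases hd with h | h
      · exact Or.inl (Fin.succAbove_lt_succAbove_iff.mp (by rw [hs', hp']; exact h))
      · exact Or.inr (Fin.succAbove_lt_succAbove_iff.mp (by rw [hq', hs']; exact h))

end Broken

end Q2S
namespace Q2S

lemma main_finComp : ∀ n : ℕ, 3 ≤ n → ∀ (c : ℕ) (S : Set (Fin (n + 1))), Sᶜ.ncard ≤ c →
    BrokenSet S → FinComp (PushoutsOf twoSegalHornClass) (genHornIncl n S) := by
  intro n
  induction n using Nat.strong_induction_on with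
  | _ n ihn =>
    intro hn c
    induction c with
    | zero =>
      intro S hc hS
      have := hS.two_le_ncard_compl
      omega
    | succ c ihc =>
      intro S hc hS
      by_cases h2 : Sᶜ.ncard = 2
      · obtain ⟨i, j, hij, rfl⟩ := base_case hS h2
        exact .of _ ⟨_, _, twoSegalHornIncl n i j, TwoSegalHorns.mk n i j hn hij,
          𝟙 _, 𝟙 _, IsPushout.of_id_snd⟩
      · have h3 : 3 ≤ Sᶜ.ncard := by
          have := hS.two_le_ncard_compl
          omega
        have hm : 4 ≤ n := step_dim hS h3
        obtain ⟨m, rfl⟩ : ∃ m, n = m + 1 := ⟨n - 1, by omega⟩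
        obtain ⟨k, hk, hSk, hSres⟩ := step_case hS h3
        rw [← hornIncl_comp (m + 1) S k]
        refine .comp _ _ ?_ ?_
        · refine finComp_of_isPushout ?_ _ _ _ (isPushout_attach S k hk)
          exact ihn m (by omega) (by omega) ((resSet S k)ᶜ.ncard) (resSet S k) le_rfl hSres
        · refine ihc (S ∪ {k}) ?_ hSk
          have hdiff : (S ∪ {k})ᶜ = Sᶜ \ {k} := by
            rw [Set.compl_union, Set.diff_eq]
          have hkc : k ∈ Sᶜ := hk
          rw [hdiff, Set.ncard_diff_singleton_of_mem hkc]
          omega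

end Q2S

/-- Every generalized 2-Segal horn inclusion is a finite composition of
pushouts of 2-Segal horn inclusions; in particular it lies in the weakly saturated class
generated by the 2-Segal horn inclusions. -/
theorem genTwoSegalHorn_finComp_pushouts (n : ℕ) (hn : 3 ≤ n) (S : Set (Fin (n + 1)))
    (hS : Q2S.BrokenSet S) :
    Q2S.FinComp (Q2S.PushoutsOf Q2S.twoSegalHornClass) (Q2S.genHornIncl n S) ∧
    Q2S.TwoSegalAnodyne (Q2S.genHornIncl n S) :=
  ⟨Q2S.main_finComp n hn _ S le_rfl hS,
    Q2S.finComp_pushoutsOf_le_saturation (Q2S.main_finComp n hn _ S le_rfl hS)⟩
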